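/- The Brauerian representation F is functorial: for split equivalences R : n → m and S : m → p in Gen, and sequences of radices ≥ 2 such that ab is appropriate for R and bc is appropriate for S, we have F_bc(S) ∘ F_ab(R) = F_ac(S ∘ R) (composition of relations), and F_aa of the identity split equivalence is the identity relation. -/
import Mathlib


/-- The weight of position `x` for radices `r`: the product of the radices at
positions after `x`. -/
def wgt {k : ℕ} (r : Fin k → ℕ) (x : Fin k) : ℕ :=
  ∏ y ∈ Finset.univ.filter (fun y => x < y), r y

/-- Mixed-radix encoding: `enc r c = Σ_x c x · ∏_{y > x} r y`. -/
def enc {k : ℕ} (r c : Fin k → ℕ) : ℕ := ∑ x, c x * wgt r x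

/-- The Brauerian representation `F_ab(R)` of an equivalence relation `R` on
`Fin (n+m)` with radices `r` : the relation consisting of the pairs `(i,j)`
such that the concatenation `c` of the mixed-radix digit expansions of `i`
(first `n` radices) and `j` (last `m` radices) satisfies `c x = c y` whenever
`(x,y) ∈ R`. -/
def Fab (n m : ℕ) (r : Fin (n + m) → ℕ) (R : Setoid (Fin (n + m))) :
    ℕ → ℕ → Prop := fun i j =>
  ∃ c : Fin (n + m) → ℕ,
    (∀ x, c x < r x) ∧
    (∀ x y, R.r x y → c x = c y) ∧
    i = enc (fun x : Fin n => r (Fin.castAdd m x)) (fun x => c (Fin.castAdd m x)) ∧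
    j = enc (fun x : Fin m => r (Fin.natAdd n x)) (fun x => c (Fin.natAdd n x))


/-- Embedding of the `n + m` positions (source and middle) into `n + m + p`. -/
def emb1 (n m p : ℕ) : Fin (n + m) → Fin (n + m + p) := Fin.castAdd p

/-- Embedding of the `m + p` positions (middle and target) into `n + m + p`. -/
def emb2 (n m p : ℕ) : Fin (m + p) → Fin (n + m + p) := fun x =>
  Fin.cast (add_assoc n m p).symm (Fin.natAdd n x)

/-- Embedding of the outer `n + p` positions into `n + m + p`. -/
def embo (n m p : ℕ) : Fin (n + p) → Fin (n + m + p) :=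
  Fin.addCases (motive := fun _ => Fin (n + m + p))
    (fun i => Fin.castAdd p (Fin.castAdd m i)) (fun j => Fin.natAdd (n + m) j)

/-- The union of `R` and `S` transferred to the `n + m + p` positions. -/
def stepRel {n m p : ℕ} (R : Setoid (Fin (n + m))) (S : Setoid (Fin (m + p)))
    (u v : Fin (n + m + p)) : Prop :=
  (∃ x y, R.r x y ∧ u = emb1 n m p x ∧ v = emb1 n m p y) ∨
  (∃ x y, S.r x y ∧ u = emb2 n m p x ∧ v = emb2 n m p y)

/-- Composition of split equivalences in `Gen`: the equivalence generated by
the union of the two relations (transitive closure through the middle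
indices), restricted to the outer indices. -/
def genComp {n m p : ℕ} (R : Setoid (Fin (n + m))) (S : Setoid (Fin (m + p))) :
    Setoid (Fin (n + p)) :=
  Setoid.comap (embo n m p) (Relation.EqvGen.setoid (stepRel R S))

lemma wgt_eq {k : ℕ} (r : Fin k → ℕ) (x : Fin k) :
    wgt r x = ∏ y, if x < y then r y else 1 := by
  rw [wgt, Finset.prod_filter]

lemma wgt_zero {k : ℕ} (r : Fin (k+1) → ℕ) :
    wgt r 0 = ∏ y, r (Fin.succ y) := by
  rw [wgt_eq, Fin.prod_univ_succ]
  simp [Fin.succ_pos]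

lemma wgt_succ {k : ℕ} (r : Fin (k+1) → ℕ) (x : Fin k) :
    wgt r x.succ = wgt (fun y => r y.succ) x := by
  rw [wgt_eq, wgt_eq, Fin.prod_univ_succ]
  simp [Fin.succ_lt_succ_iff, Fin.not_lt_zero]

lemma enc_succ {k : ℕ} (r c : Fin (k+1) → ℕ) :
    enc r c = c 0 * ∏ y, r (Fin.succ y) +
      enc (fun y => r y.succ) (fun y => c y.succ) := by
  rw [enc, Fin.sum_univ_succ, wgt_zero]
  congr 1
  rw [enc]
  exact Finset.sum_congr rfl fun x _ => by rw [wgt_succ]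

lemma enc_lt {k : ℕ} (r c : Fin k → ℕ) (h : ∀ x, c x < r x) :
    enc r c < ∏ x, r x := by
  induction k with
  | zero => simp [enc]
  | succ k ih =>
    rw [enc_succ, Fin.prod_univ_succ]
    have h1 := ih (fun y => r y.succ) (fun y => c y.succ) (fun y => h y.succ)
    have h0 := h 0
    calc c 0 * ∏ y, r (Fin.succ y) + enc (fun y => r y.succ) (fun y => c y.succ)
        < (c 0 + 1) * ∏ y, r (Fin.succ y) := by nlinarith
      _ ≤ r 0 * ∏ y, r (Fin.succ y) := Nat.mul_le_mul_right _ h0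

lemma radix_unique {P a b s t : ℕ} (hs : s < P) (ht : t < P)
    (h : a * P + s = b * P + t) : a = b ∧ s = t := by
  have hP : 0 < P := Nat.pos_of_ne_zero (by omega)
  have ha : (a * P + s) / P = a := by
    rw [add_comm, Nat.add_mul_div_right _ _ hP, Nat.div_eq_of_lt hs, zero_add]
  have hb : (b * P + t) / P = b := by
    rw [add_comm, Nat.add_mul_div_right _ _ hP, Nat.div_eq_of_lt ht, zero_add]
  have hab : a = b := by rw [← ha, ← hb, h]
  subst hab
  exact ⟨rfl, by omega⟩

lemma enc_inj {k : ℕ} (r c₁ c₂ : Fin k → ℕ) (h₁ : ∀ x, c₁ x < r x)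
    (h₂ : ∀ x, c₂ x < r x) (h : enc r c₁ = enc r c₂) : c₁ = c₂ := by
  induction k with
  | zero => funext x; exact x.elim0
  | succ k ih =>
    rw [enc_succ r c₁, enc_succ r c₂] at h
    have t1 := enc_lt (fun y => r y.succ) (fun y => c₁ y.succ) (fun y => h₁ y.succ)
    have t2 := enc_lt (fun y => r y.succ) (fun y => c₂ y.succ) (fun y => h₂ y.succ)
    obtain ⟨hd, ht⟩ := radix_unique t1 t2 h
    have := ih (fun y => r y.succ) _ _ (fun y => h₁ y.succ) (fun y => h₂ y.succ) ht
    funext x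
    refine Fin.cases ?_ ?_ x
    · exact hd
    · intro y; exact congrFun this y

lemma enc_surj {k : ℕ} (r : Fin k → ℕ) (i : ℕ) (h : i < ∏ x, r x) :
    ∃ c, (∀ x, c x < r x) ∧ i = enc r c := by
  induction k generalizing i with
  | zero =>
    refine ⟨fun x => x.elim0, fun x => x.elim0, ?_⟩
    simp only [enc, Finset.univ_eq_empty, Finset.sum_empty]
    simpa using h
  | succ k ih =>
    rw [Fin.prod_univ_succ] at h
    have hP : 0 < ∏ y, r (Fin.succ y) := by
      rcases Nat.eq_zero_or_pos (∏ y, r (Fin.succ y)) with h0 | h0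
      · rw [h0, Nat.mul_zero] at h; omega
      · exact h0
    obtain ⟨g, hg, hge⟩ := ih (fun y => r y.succ) (i % ∏ y, r (Fin.succ y))
      (Nat.mod_lt _ hP)
    refine ⟨Fin.cases (i / ∏ y, r (Fin.succ y)) g, ?_, ?_⟩
    · intro x
      refine Fin.cases ?_ ?_ x
      · simp only [Fin.cases_zero]
        exact Nat.div_lt_of_lt_mul (by rwa [mul_comm] at h)
      · intro y; simpa using hg y
    · rw [enc_succ]
      simp only [Fin.cases_zero, Fin.cases_succ]
      rw [← hge]
      rw [mul_comm]
      exact (Nat.div_add_mod i _).symm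


section Aux
variable {n m p : ℕ}

lemma embo_castAdd (x : Fin n) :
    embo n m p (Fin.castAdd p x) = Fin.castAdd p (Fin.castAdd m x) := by
  simp [embo]

lemma embo_natAdd (x : Fin p) :
    embo n m p (Fin.natAdd n x) = Fin.natAdd (n + m) x := by
  simp [embo]

lemma emb2_castAdd (x : Fin m) :
    emb2 n m p (Fin.castAdd p x) = Fin.castAdd p (Fin.natAdd n x) := by
  apply Fin.ext; simp [emb2]

lemma emb2_natAdd (x : Fin p) :
    emb2 n m p (Fin.natAdd m x) = Fin.natAdd (n + m) x := by
  apply Fin.ext; simp [emb2]; omega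

lemma emb1_natAdd (x : Fin m) :
    emb1 n m p (Fin.natAdd n x) = emb2 n m p (Fin.castAdd p x) := by
  apply Fin.ext; simp [emb1, emb2]

lemma embo_castAdd' (x : Fin n) :
    embo n m p (Fin.castAdd p x) = emb1 n m p (Fin.castAdd m x) :=
  embo_castAdd x

lemma embo_natAdd' (x : Fin p) :
    embo n m p (Fin.natAdd n x) = emb2 n m p (Fin.natAdd m x) := by
  rw [embo_natAdd, emb2_natAdd]

def rnmp (a : Fin n → ℕ) (b : Fin m → ℕ) (c : Fin p → ℕ) : Fin (n + m + p) → ℕ :=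
  Fin.addCases (motive := fun _ => ℕ) (Fin.addCases (motive := fun _ => ℕ) a b) c

variable (a : Fin n → ℕ) (b : Fin m → ℕ) (c : Fin p → ℕ)

lemma rnmp_emb1 (x : Fin (n + m)) :
    rnmp a b c (emb1 n m p x) = Fin.addCases (motive := fun _ => ℕ) a b x := by
  simp [rnmp, emb1]

lemma rnmp_emb2 (x : Fin (m + p)) :
    rnmp a b c (emb2 n m p x) = Fin.addCases (motive := fun _ => ℕ) b c x := by
  refine Fin.addCases (motive := fun x =>
    rnmp a b c (emb2 n m p x) = Fin.addCases (motive := fun _ => ℕ) b c x)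
    (fun y => ?_) (fun y => ?_) x
  · beta_reduce; rw [emb2_castAdd]; simp [rnmp]
  · beta_reduce; rw [emb2_natAdd]; simp [rnmp]

lemma rnmp_embo (x : Fin (n + p)) :
    rnmp a b c (embo n m p x) = Fin.addCases (motive := fun _ => ℕ) a c x := by
  refine Fin.addCases (motive := fun x =>
    rnmp a b c (embo n m p x) = Fin.addCases (motive := fun _ => ℕ) a c x)
    (fun y => ?_) (fun y => ?_) x
  · beta_reduce; rw [embo_castAdd]; simp [rnmp]
  · beta_reduce; rw [embo_natAdd]; simp [rnmp]

end Aux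

lemma addCases_castAdd_fn {n m : ℕ} (a : Fin n → ℕ) (b : Fin m → ℕ) :
    (fun x : Fin n => Fin.addCases (motive := fun _ => ℕ) a b (Fin.castAdd m x)) = a :=
  funext fun x => Fin.addCases_left x

lemma addCases_natAdd_fn {n m : ℕ} (a : Fin n → ℕ) (b : Fin m → ℕ) :
    (fun x : Fin m => Fin.addCases (motive := fun _ => ℕ) a b (Fin.natAdd n x)) = b :=
  funext fun x => Fin.addCases_right x

lemma eqvGen_lift {α : Type*} {r : α → α → Prop} {f : α → ℕ}
    (hf : ∀ u v, r u v → f u = f v) :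
    ∀ u v, Relation.EqvGen r u v → f u = f v := by
  intro u v h
  induction h with
  | rel _ _ h => exact hf _ _ h
  | refl => rfl
  | symm _ _ _ ih => exact ih.symm
  | trans _ _ _ _ _ ih1 ih2 => exact ih1.trans ih2

lemma lift_digits {α β : Type*} (r : α → α → Prop) (e : β → α) (cd : β → ℕ)
    (hcd : ∀ z z', Relation.EqvGen r (e z) (e z') → cd z = cd z') :
    ∃ d : α → ℕ, (∀ z, d (e z) = cd z) ∧
      (∀ u v, Relation.EqvGen r u v → d u = d v) ∧
      (∀ u, d u = 0 ∨ ∃ z, Relation.EqvGen r u (e z) ∧ d u = cd z) := by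
  classical
  refine ⟨fun u => if h : ∃ z, Relation.EqvGen r u (e z) then cd h.choose else 0,
    ?_, ?_, ?_⟩
  · intro z
    have hex : ∃ z', Relation.EqvGen r (e z) (e z') := ⟨z, Relation.EqvGen.refl _⟩
    simp only [dif_pos hex]
    exact (hcd _ _ hex.choose_spec).symm
  · intro u v huv
    by_cases h : ∃ z, Relation.EqvGen r u (e z)
    · have h' : ∃ z, Relation.EqvGen r v (e z) :=
        ⟨h.choose, Relation.EqvGen.trans _ _ _ (Relation.EqvGen.symm _ _ huv) h.choose_spec⟩
      simp only [dif_pos h, dif_pos h']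
      exact hcd _ _ (Relation.EqvGen.trans _ _ _
        (Relation.EqvGen.symm _ _ h.choose_spec)
        (Relation.EqvGen.trans _ _ _ huv h'.choose_spec))
    · have h' : ¬ ∃ z, Relation.EqvGen r v (e z) := by
        rintro ⟨z, hz⟩; exact h ⟨z, Relation.EqvGen.trans _ _ _ huv hz⟩
      simp only [dif_neg h, dif_neg h']
  · intro u
    by_cases h : ∃ z, Relation.EqvGen r u (e z)
    · exact Or.inr ⟨h.choose, h.choose_spec, by simp only [dif_pos h]⟩
    · exact Or.inl (by simp only [dif_neg h])

/-- Functoriality of the Brauerian representation: for split equivalences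
`R : n → m` and `S : m → p` and radices `≥ 2` such that `ab` is appropriate
for `R` and `bc` is appropriate for `S`, we have
`F_bc(S) ∘ F_ab(R) = F_ac(S ∘ R)` as composition of relations, and `F_aa` of
the identity split equivalence (with classes `{i, i+n}`) is the identity
relation on `Fin (a₀⋯a_{n-1})`. -/
theorem stmt11 {n m p : ℕ} (R : Setoid (Fin (n + m))) (S : Setoid (Fin (m + p)))
    (a : Fin n → ℕ) (b : Fin m → ℕ) (c : Fin p → ℕ)
    (ha : ∀ x, 2 ≤ a x) (hb : ∀ x, 2 ≤ b x) (hc : ∀ x, 2 ≤ c x)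
    (happR : ∀ x y, R.r x y →
      Fin.addCases (motive := fun _ => ℕ) a b x =
      Fin.addCases (motive := fun _ => ℕ) a b y)
    (happS : ∀ x y, S.r x y →
      Fin.addCases (motive := fun _ => ℕ) b c x =
      Fin.addCases (motive := fun _ => ℕ) b c y) :
    (Relation.Comp (Fab n m (Fin.addCases (motive := fun _ => ℕ) a b) R)
                   (Fab m p (Fin.addCases (motive := fun _ => ℕ) b c) S) =
      Fab n p (Fin.addCases (motive := fun _ => ℕ) a c) (genComp R S)) ∧
    (∀ i j, Fab n n (Fin.addCases (motive := fun _ => ℕ) a a)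
        (Setoid.ker (Fin.addCases (motive := fun _ => Fin n) id id)) i j ↔
      (i < ∏ x, a x ∧ j = i)) := by

  constructor
  · funext i j
    apply propext
    constructor
    · rintro ⟨k, ⟨c1, hc1lt, hc1R, hi, hk1⟩, ⟨c2, hc2lt, hc2S, hk2, hj⟩⟩
      rw [addCases_castAdd_fn] at hi
      rw [addCases_natAdd_fn] at hk1
      rw [addCases_castAdd_fn] at hk2
      rw [addCases_natAdd_fn] at hj
      have hmid : ∀ x : Fin m, c1 (Fin.natAdd n x) = c2 (Fin.castAdd p x) := by
        have hb1 : ∀ x, c1 (Fin.natAdd n x) < b x := fun x => by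
          have := hc1lt (Fin.natAdd n x); rwa [Fin.addCases_right] at this
        have hb2 : ∀ x, c2 (Fin.castAdd p x) < b x := fun x => by
          have := hc2lt (Fin.castAdd p x); rwa [Fin.addCases_left] at this
        have := enc_inj b _ _ hb1 hb2 (by rw [← hk1, ← hk2])
        exact fun x => congrFun this x
      set d : Fin (n + m + p) → ℕ :=
        Fin.addCases (motive := fun _ => ℕ) c1 (fun z => c2 (Fin.natAdd m z)) with hd
      have hd1 : ∀ x, d (emb1 n m p x) = c1 x := fun x => by
        simp [hd, emb1]
      have hd2 : ∀ x, d (emb2 n m p x) = c2 x := by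
        intro x
        refine Fin.addCases (motive := fun x => d (emb2 n m p x) = c2 x)
          (fun y => ?_) (fun y => ?_) x
        · beta_reduce
          rw [emb2_castAdd]
          simp only [hd, Fin.addCases_left]
          exact hmid y
        · beta_reduce
          rw [emb2_natAdd]
          simp [hd]
      have hstep : ∀ u v, stepRel R S u v → d u = d v := by
        rintro u v (⟨x, y, hxy, rfl, rfl⟩ | ⟨x, y, hxy, rfl, rfl⟩)
        · rw [hd1, hd1]; exact hc1R x y hxy
        · rw [hd2, hd2]; exact hc2S x y hxy
      have hde := eqvGen_lift hstep
      refine ⟨fun z => d (embo n m p z), ?_, ?_, ?_, ?_⟩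
      · intro x
        refine Fin.addCases (motive := fun x =>
          d (embo n m p x) < Fin.addCases (motive := fun _ => ℕ) a c x)
          (fun y => ?_) (fun y => ?_) x
        · beta_reduce
          rw [embo_castAdd', hd1, Fin.addCases_left]
          have := hc1lt (Fin.castAdd m y); rwa [Fin.addCases_left] at this
        · beta_reduce
          rw [embo_natAdd', hd2, Fin.addCases_right]
          have := hc2lt (Fin.natAdd m y); rwa [Fin.addCases_right] at this
      · intro z z' hzz
        exact hde _ _ hzz
      · rw [addCases_castAdd_fn]
        have hdig : (fun x : Fin n => d (embo n m p (Fin.castAdd p x)))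
            = fun x => c1 (Fin.castAdd m x) := funext fun x => by
          rw [embo_castAdd', hd1]
        rw [hdig]; exact hi
      · rw [addCases_natAdd_fn]
        have hdig : (fun x : Fin p => d (embo n m p (Fin.natAdd n x)))
            = fun x => c2 (Fin.natAdd m x) := funext fun x => by
          rw [embo_natAdd', hd2]
        rw [hdig]; exact hj
    · rintro ⟨cd, hlt, hresp, hi, hj⟩
      rw [addCases_castAdd_fn] at hi
      rw [addCases_natAdd_fn] at hj
      have hcd : ∀ z z', Relation.EqvGen (stepRel R S) (embo n m p z) (embo n m p z') →
          cd z = cd z' := fun z z' h => hresp z z' h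
      obtain ⟨d, hdo, hde, hdc⟩ := lift_digits _ _ _ hcd
      have hrstep : ∀ u v, stepRel R S u v → rnmp a b c u = rnmp a b c v := by
        rintro u v (⟨x, y, hxy, rfl, rfl⟩ | ⟨x, y, hxy, rfl, rfl⟩)
        · rw [rnmp_emb1, rnmp_emb1]; exact happR x y hxy
        · rw [rnmp_emb2, rnmp_emb2]; exact happS x y hxy
      have hre := eqvGen_lift hrstep
      have hrpos : ∀ u, 0 < rnmp a b c u := by
        intro u
        refine Fin.addCases (motive := fun u => 0 < rnmp a b c u)
          (fun y => ?_) (fun y => ?_) u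
        · show 0 < rnmp a b c (emb1 n m p y)
          rw [rnmp_emb1]
          refine Fin.addCases (motive := fun y =>
            0 < Fin.addCases (motive := fun _ => ℕ) a b y)
            (fun x => ?_) (fun x => ?_) y
          · beta_reduce; rw [Fin.addCases_left]; have := ha x; omega
          · beta_reduce; rw [Fin.addCases_right]; have := hb x; omega
        · show 0 < rnmp a b c (Fin.natAdd (n + m) y)
          simp only [rnmp, Fin.addCases_right]
          have := hc y; omega
      have hdlt : ∀ u, d u < rnmp a b c u := by
        intro u
        rcases hdc u with h0 | ⟨z, hz, hzv⟩
        · rw [h0]; exact hrpos u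
        · rw [hzv, hre _ _ hz, rnmp_embo]
          exact hlt z
      refine ⟨enc b (fun x => d (emb2 n m p (Fin.castAdd p x))),
        ⟨fun x => d (emb1 n m p x), ?_, ?_, ?_, ?_⟩,
        ⟨fun x => d (emb2 n m p x), ?_, ?_, ?_, ?_⟩⟩
      · intro x
        have := hdlt (emb1 n m p x); rwa [rnmp_emb1] at this
      · intro x y hxy
        exact hde _ _ (Relation.EqvGen.rel _ _ (Or.inl ⟨x, y, hxy, rfl, rfl⟩))
      · rw [addCases_castAdd_fn]
        have hdig : (fun x : Fin n => d (emb1 n m p (Fin.castAdd m x)))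
            = fun x => cd (Fin.castAdd p x) := funext fun x => by
          rw [← embo_castAdd', hdo]
        rw [hdig]; exact hi
      · rw [addCases_natAdd_fn]
        have hdig : (fun x : Fin m => d (emb1 n m p (Fin.natAdd n x)))
            = fun x => d (emb2 n m p (Fin.castAdd p x)) := funext fun x => by
          rw [emb1_natAdd]
        rw [hdig]
      · intro x
        have := hdlt (emb2 n m p x); rwa [rnmp_emb2] at this
      · intro x y hxy
        exact hde _ _ (Relation.EqvGen.rel _ _ (Or.inr ⟨x, y, hxy, rfl, rfl⟩))
      · rw [addCases_castAdd_fn]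
      · rw [addCases_natAdd_fn]
        have hdig : (fun x : Fin p => d (emb2 n m p (Fin.natAdd m x)))
            = fun x => cd (Fin.natAdd n x) := funext fun x => by
          rw [← embo_natAdd', hdo]
        rw [hdig]; exact hj
  · intro i j
    constructor
    · rintro ⟨cg, hlt, hresp, hi, hj⟩
      rw [addCases_castAdd_fn] at hi
      rw [addCases_natAdd_fn] at hj
      have hba : ∀ x, cg (Fin.castAdd n x) < a x := fun x => by
        have := hlt (Fin.castAdd n x); rwa [Fin.addCases_left] at this
      refine ⟨by rw [hi]; exact enc_lt a _ hba, ?_⟩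
      rw [hi, hj]
      congr 1
      funext x
      refine (hresp (Fin.castAdd n x) (Fin.natAdd n x) ?_).symm
      show Fin.addCases (motive := fun _ => Fin n) id id (Fin.castAdd n x) =
        Fin.addCases (motive := fun _ => Fin n) id id (Fin.natAdd n x)
      rw [Fin.addCases_left, Fin.addCases_right]
    · rintro ⟨hilt, hji⟩
      obtain ⟨g, hg, hge⟩ := enc_surj a i hilt
      refine ⟨fun u => g (Fin.addCases (motive := fun _ => Fin n) id id u),
        ?_, ?_, ?_, ?_⟩
      · intro x
        refine Fin.addCases (motive := fun x =>
          g (Fin.addCases (motive := fun _ => Fin n) id id x) <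
            Fin.addCases (motive := fun _ => ℕ) a a x)
          (fun y => ?_) (fun y => ?_) x
        · beta_reduce; rw [Fin.addCases_left, Fin.addCases_left]; exact hg y
        · beta_reduce; rw [Fin.addCases_right, Fin.addCases_right]; exact hg y
      · intro x y h
        exact congrArg g h
      · rw [addCases_castAdd_fn]
        have hdig : (fun x : Fin n =>
            g (Fin.addCases (motive := fun _ => Fin n) id id (Fin.castAdd n x))) = g :=
          funext fun x => by rw [Fin.addCases_left]; rfl
        rw [hdig]; exact hge
      · rw [addCases_natAdd_fn]
        have hdig : (fun x : Fin n =>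
            g (Fin.addCases (motive := fun _ => Fin n) id id (Fin.natAdd n x))) = g :=
          funext fun x => by rw [Fin.addCases_right]; rfl
        rw [hdig, hji]; exact hge
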